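/- For positive semidefinite matrices A, B with Tr(A+B)=1: 4 Tr(AB) ≤ 1 - ‖A-B‖₁², i.e., L(A,B) ≤ 1 - T(A,B)². -/

import Mathlib

open Matrix
open scoped ComplexOrder

/-- Trace norm `‖X‖₁ = Tr √(XᴴX)`. -/
noncomputable def traceNorm {n : Type*} [Fintype n] [DecidableEq n] (X : Matrix n n ℂ) : ℝ :=
  (((Matrix.posSemidef_conjTranspose_mul_self X).1.eigenvectorUnitary.1 *
      diagonal ((RCLike.ofReal : ℝ → ℂ) ∘ Real.sqrt ∘
        (Matrix.posSemidef_conjTranspose_mul_self X).1.eigenvalues) *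
      (star (Matrix.posSemidef_conjTranspose_mul_self X).1.eigenvectorUnitary : Matrix n n ℂ)).trace).re

/-- Fractional power `A^s` of a positive semidefinite matrix, defined spectrally with the
convention `0 ^ s = 0` for all real `s`. -/
noncomputable def Matrix.PosSemidef.rpow {n : Type*} [Fintype n] [DecidableEq n]
    {A : Matrix n n ℂ} (hA : A.PosSemidef) (s : ℝ) : Matrix n n ℂ :=
  hA.1.cfc (fun x => if x = 0 then 0 else x ^ s)

/-- Matrix logarithm of a positive semidefinite matrix, defined spectrally with the
convention `log 0 = 0` on the kernel. -/
noncomputable def Matrix.PosSemidef.log {n : Type*} [Fintype n] [DecidableEq n]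
    {A : Matrix n n ℂ} (hA : A.PosSemidef) : Matrix n n ℂ :=
  hA.1.cfc Real.log

/-!
Write `A = XᴴX`, `B = YᴴY` and let `P` be the spectral projection onto the positive part of
`A - B`. With the Frobenius norms `a₁ = ‖XP‖`, `a₂ = ‖X(1 - P)‖`, `b₁ = ‖YP‖`, `b₂ = ‖Y(1 - P)‖`
we get `Tr A = a₁² + a₂²`, `Tr B = b₁² + b₂²` and `‖A - B‖₁ = Tr((2P - 1)(A - B)) =
a₁² - b₁² - (a₂² - b₂²)`, while `Tr(AB) = ‖XYᴴ‖² ≤ (a₁b₁ + a₂b₂)²` because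
`XYᴴ = (XP)(YP)ᴴ + (X(1 - P))(Y(1 - P))ᴴ`. What remains is a scalar inequality whose two sides
differ by `4(a₁a₂ - b₁b₂)²`.
-/

open scoped MatrixOrder

attribute [local instance] Matrix.frobeniusNormedAddCommGroup

lemma four_mul_sq_le_sq_sub_sq (a₁ a₂ b₁ b₂ : ℝ) :
    4 * (a₁ * b₁ + a₂ * b₂) ^ 2 ≤
      (a₁ ^ 2 + a₂ ^ 2 + (b₁ ^ 2 + b₂ ^ 2)) ^ 2 - (a₁ ^ 2 - b₁ ^ 2 - (a₂ ^ 2 - b₂ ^ 2)) ^ 2 := by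
  nlinarith [sq_nonneg (a₁ * a₂ - b₁ * b₂)]

namespace Matrix

lemma IsStarProjection.mul_conjTranspose_eq {α m n : Type*} [CommRing α] [StarRing α]
    [Fintype n] [DecidableEq n] {P : Matrix n n α} (hP : IsStarProjection P)
    (X Y : Matrix m n α) :
    X * Yᴴ = (X * P) * (Y * P)ᴴ + (X * (1 - P)) * (Y * (1 - P))ᴴ := by
  have hPH : Pᴴ = P := hP.isSelfAdjoint
  have hQH : (1 - P)ᴴ = 1 - P := hP.one_sub.isSelfAdjoint
  calc X * Yᴴ = X * (P * P + (1 - P) * (1 - P)) * Yᴴ := by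
        rw [hP.isIdempotentElem.eq, hP.one_sub.isIdempotentElem.eq, add_sub_cancel,
          Matrix.mul_one]
    _ = _ := by
        simp only [conjTranspose_mul, hPH, hQH, Matrix.mul_add, Matrix.add_mul, Matrix.mul_assoc]

section Frobenius

variable {𝕜 m n : Type*} [RCLike 𝕜] [Fintype m] [Fintype n]

lemma frobenius_norm_sq_eq_re_trace_mul_conjTranspose (X : Matrix m n 𝕜) :
    ‖X‖ ^ 2 = RCLike.re (X * Xᴴ).trace := by
  rw [frobenius_norm_def, ← Real.rpow_natCast, ← Real.rpow_mul (by positivity)]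
  simp only [trace, diag_apply, mul_apply, conjTranspose_apply, RCLike.star_def, RCLike.mul_conj,
    map_sum]
  norm_num

lemma IsStarProjection.re_trace_mul_conjTranspose_mul_self {P : Matrix n n 𝕜}
    (hP : IsStarProjection P) (X : Matrix m n 𝕜) :
    RCLike.re (P * (Xᴴ * X)).trace = ‖X * P‖ ^ 2 := by
  have hPH : Pᴴ = P := hP.isSelfAdjoint
  rw [frobenius_norm_sq_eq_re_trace_mul_conjTranspose, conjTranspose_mul, hPH,
    ← Matrix.mul_assoc (X * P), Matrix.mul_assoc X P P, hP.isIdempotentElem.eq,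
    trace_mul_comm (X * P), trace_mul_comm P, Matrix.mul_assoc]

variable [DecidableEq n]

lemma IsStarProjection.re_trace_conjTranspose_mul_self {P : Matrix n n 𝕜}
    (hP : IsStarProjection P) (X : Matrix m n 𝕜) :
    RCLike.re (Xᴴ * X).trace = ‖X * P‖ ^ 2 + ‖X * (1 - P)‖ ^ 2 := by
  rw [← hP.re_trace_mul_conjTranspose_mul_self, ← hP.one_sub.re_trace_mul_conjTranspose_mul_self,
    ← map_add, ← trace_add, ← add_mul, add_sub_cancel, one_mul]

lemma IsStarProjection.re_trace_mul_le {P : Matrix n n 𝕜} (hP : IsStarProjection P)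
    (X Y : Matrix m n 𝕜) :
    RCLike.re (Xᴴ * X * (Yᴴ * Y)).trace ≤
      (‖X * P‖ * ‖Y * P‖ + ‖X * (1 - P)‖ * ‖Y * (1 - P)‖) ^ 2 := by
  have hsq : RCLike.re (Xᴴ * X * (Yᴴ * Y)).trace = ‖X * Yᴴ‖ ^ 2 := by
    rw [frobenius_norm_sq_eq_re_trace_mul_conjTranspose, conjTranspose_mul,
      conjTranspose_conjTranspose, Matrix.mul_assoc, trace_mul_comm]
    simp only [Matrix.mul_assoc]
  have hle : ‖X * Yᴴ‖ ≤ ‖X * P‖ * ‖Y * P‖ + ‖X * (1 - P)‖ * ‖Y * (1 - P)‖ := by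
    rw [hP.mul_conjTranspose_eq X Y]
    refine (norm_add_le _ _).trans (add_le_add ?_ ?_) <;>
      exact (frobenius_norm_mul _ _).trans_eq (by rw [frobenius_norm_conjTranspose])
  rw [hsq]
  gcongr

end Frobenius

variable {n : Type*} [Fintype n] [DecidableEq n]

noncomputable def positivePartProjection {𝕜 : Type*} [RCLike 𝕜] (D : Matrix n n 𝕜) :
    Matrix n n 𝕜 :=
  cfc (fun x : ℝ => if 0 < x then 1 else 0) D

-- No hermiticity is needed: for a non-Hermitian `D` the junk value of `cfc` is `0`.
lemma isStarProjection_positivePartProjection {𝕜 : Type*} [RCLike 𝕜] (D : Matrix n n 𝕜) :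
    IsStarProjection (positivePartProjection D) := by
  refine ⟨?_, IsSelfAdjoint.cfc⟩
  rw [IsIdempotentElem, positivePartProjection,
    ← cfc_mul _ _ _ (D.finite_real_spectrum.continuousOn _) (D.finite_real_spectrum.continuousOn _)]
  exact cfc_congr fun x _ => by split_ifs <;> simp

lemma traceNorm_eq_re_trace_cfc_sqrt (X : Matrix n n ℂ) :
    traceNorm X = (cfc Real.sqrt (Xᴴ * X)).trace.re := by
  rw [(posSemidef_conjTranspose_mul_self X).1.cfc_eq]
  rfl

lemma IsHermitian.traceNorm_eq {D : Matrix n n ℂ} (hD : D.IsHermitian) :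
    traceNorm D = (positivePartProjection D * D).trace.re -
      ((1 - positivePartProjection D) * D).trace.re := by
  have hcont : ∀ f : ℝ → ℝ, ContinuousOn f (spectrum ℝ D) :=
    D.finite_real_spectrum.continuousOn
  have habs : cfc Real.sqrt (Dᴴ * D) = cfc (|·| : ℝ → ℝ) D := by
    calc cfc Real.sqrt (Dᴴ * D) = cfc Real.sqrt (cfc (· ^ 2 : ℝ → ℝ) D) := by
          rw [cfc_pow_id D 2 hD.isSelfAdjoint, hD.eq, sq]
      _ = cfc (fun x => Real.sqrt (x ^ 2)) D := (cfc_comp' _ _ D).symm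
      _ = cfc (|·| : ℝ → ℝ) D := cfc_congr fun x _ => Real.sqrt_sq_eq_abs x
  have hsign : cfc (|·| : ℝ → ℝ) D =
      (positivePartProjection D - (1 - positivePartProjection D)) * D := by
    calc cfc (|·| : ℝ → ℝ) D
        = cfc (fun x : ℝ => ((if 0 < x then 1 else 0) - (1 - if 0 < x then 1 else 0)) * x) D :=
          cfc_congr fun x _ => by
            split_ifs with hx
            · simp [abs_of_pos hx]
            · simp [abs_of_nonpos (not_lt.mp hx)]
      _ = _ := by
          rw [cfc_mul _ _ D (hcont _) (hcont _), cfc_sub _ _ D (hcont _) (hcont _),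
            cfc_sub _ _ D (hcont _) (hcont _), cfc_const_one ℝ D, cfc_id' ℝ D,
            positivePartProjection]
  rw [traceNorm_eq_re_trace_cfc_sqrt, habs, hsign, sub_mul, trace_sub, Complex.sub_re]

end Matrix

/-- `L(A,B) ≤ 1 - T(A,B)²`: for positive semidefinite `A`, `B` with `Tr A + Tr B = 1`,
`4 Tr(AB) ≤ 1 - ‖A-B‖₁²`. -/
theorem stmt18 {n : Type*} [Fintype n] [DecidableEq n]
    {A B : Matrix n n ℂ} (hA : A.PosSemidef) (hB : B.PosSemidef)
    (htr : A.trace + B.trace = 1) :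
    4 * ((A * B).trace).re ≤ 1 - (traceNorm (A - B)) ^ 2 := by
  have hT := (hA.1.sub hB.1).traceNorm_eq
  obtain ⟨X, rfl⟩ := CStarAlgebra.nonneg_iff_eq_star_mul_self.mp hA.nonneg
  obtain ⟨Y, rfl⟩ := CStarAlgebra.nonneg_iff_eq_star_mul_self.mp hB.nonneg
  simp only [star_eq_conjTranspose] at hT htr ⊢
  set P := (Xᴴ * X - Yᴴ * Y).positivePartProjection
  have hP : IsStarProjection P := isStarProjection_positivePartProjection _
  have hsum : ‖X * P‖ ^ 2 + ‖X * (1 - P)‖ ^ 2 + (‖Y * P‖ ^ 2 + ‖Y * (1 - P)‖ ^ 2) = 1 := by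
    rw [← hP.re_trace_conjTranspose_mul_self, ← hP.re_trace_conjTranspose_mul_self, ← map_add,
      htr, RCLike.one_re]
  rw [mul_sub, mul_sub, trace_sub, trace_sub, Complex.sub_re, Complex.sub_re] at hT
  simp only [← RCLike.re_to_complex, hP.re_trace_mul_conjTranspose_mul_self,
    hP.one_sub.re_trace_mul_conjTranspose_mul_self] at hT
  calc 4 * (Xᴴ * X * (Yᴴ * Y)).trace.re
      ≤ 4 * (‖X * P‖ * ‖Y * P‖ + ‖X * (1 - P)‖ * ‖Y * (1 - P)‖) ^ 2 := by
        gcongr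
        exact hP.re_trace_mul_le X Y
    _ ≤ _ := four_mul_sq_le_sq_sub_sq ..
    _ = 1 - traceNorm (Xᴴ * X - Yᴴ * Y) ^ 2 := by rw [hsum, hT, one_pow]
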